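/- Let $G$ be a group and let $A, B, C$ be subgroups with $B \leq C$. Assume that the products $AB$, $AC$, and $(A \cap C)B$ are all subgroups of $G$. Then the map sending the coset $c \cdot (A\cap C)B$ to the coset $c \cdot AB$ is a well-defined bijection from $C/((A\cap C)B)$ onto $AC/AB$; in particular the indices $[AC : AB]$ and $[C : (A\cap C)B]$ are equal. -/

import Mathlib

/-!
Since `B ≤ C`, Dedekind's modular law gives `(A ⊓ C)B = AB ∩ C`, so `(A ⊓ C)B` is the stabiliser
in `C` of the coset `AB` and the inclusion `C ≤ AC` induces an injection `C/(AB ∩ C) → AC/AB`.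
It is onto because `AC`, being a subgroup, equals `(AC)⁻¹ = CA ⊆ C · AB`.
-/

open Pointwise

namespace Subgroup

variable {G : Type*} [Group G]

theorem coe_eq_mul_comm {K A C : Subgroup G} (h : (K : Set G) = A * C) :
    (K : Set G) = C * A := by
  rw [← inv_coe_set (H := K), h, mul_inv_rev, inv_coe_set, inv_coe_set]

theorem quotientSubgroupOfEmbeddingOfLE_surjective (H : Subgroup G) {s t : Subgroup G}
    (hst : s ≤ t) (hts : (t : Set G) ⊆ s * H) :
    Function.Surjective (quotientSubgroupOfEmbeddingOfLE H hst) := by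
  intro q
  induction q using QuotientGroup.induction_on with | H x => ?_
  obtain ⟨c, hc, h, hh, hx⟩ := hts x.2
  refine ⟨QuotientGroup.mk ⟨c, hc⟩, QuotientGroup.eq.mpr ?_⟩
  change c⁻¹ * x ∈ H
  rwa [← hx, inv_mul_cancel_left]

noncomputable def quotientSubgroupOfEquivOfLE (H : Subgroup G) {s t : Subgroup G}
    (hst : s ≤ t) (hts : (t : Set G) ⊆ s * H) : s ⧸ H.subgroupOf s ≃ t ⧸ H.subgroupOf t :=
  Equiv.ofBijective _ ⟨(quotientSubgroupOfEmbeddingOfLE H hst).injective,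
    quotientSubgroupOfEmbeddingOfLE_surjective H hst hts⟩

theorem quotientSubgroupOfEquivOfLE_apply_mk (H : Subgroup G) {s t : Subgroup G}
    (hst : s ≤ t) (hts : (t : Set G) ⊆ s * H) (g : s) :
    quotientSubgroupOfEquivOfLE H hst hts (QuotientGroup.mk g) =
      QuotientGroup.mk (Set.inclusion hst g) :=
  rfl

theorem relIndex_eq_of_le_of_subset_mul (H : Subgroup G) {s t : Subgroup G}
    (hst : s ≤ t) (hts : (t : Set G) ⊆ s * H) : H.relIndex t = H.relIndex s :=
  Nat.card_congr (quotientSubgroupOfEquivOfLE H hst hts).symm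

end Subgroup

open Subgroup in
/-- Index equality for products of subgroups: if `B ≤ C` and the products `AB`, `AC`,
`(A ⊓ C)B` are subgroups, then `c • (A ⊓ C)B ↦ c • AB` is a well-defined bijection
`C/((A ⊓ C)B) ≃ AC/AB`; in particular `[AC : AB] = [C : (A ⊓ C)B]`. -/
theorem index_eq_of_products_subgroups {G : Type*} [Group G]
    (A B C AB AC ACB : Subgroup G) (hBC : B ≤ C)
    (hAB : (AB : Set G) = (A : Set G) * (B : Set G))
    (hAC : (AC : Set G) = (A : Set G) * (C : Set G))
    (hACB : (ACB : Set G) = ((A ⊓ C : Subgroup G) : Set G) * (B : Set G)) :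
    (∃ e : C ⧸ ACB.subgroupOf C ≃ AC ⧸ AB.subgroupOf AC,
      ∀ c : C, e (QuotientGroup.mk c) =
        QuotientGroup.mk (⟨(c : G), by
          have h : (1 : G) * (c : G) ∈ (A : Set G) * (C : Set G) :=
            Set.mul_mem_mul A.one_mem c.2
          rw [one_mul] at h
          rw [← hAC] at h
          exact h⟩ : AC)) ∧
    AB.relIndex AC = ACB.relIndex C := by
  obtain rfl : ACB = AB ⊓ C := SetLike.coe_injective <| by
    rw [hACB, inf_comm, inf_mul_assoc C A B hBC, coe_inf, hAB, Set.inter_comm]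
  have hC_le_AC : C ≤ AC := fun c hc => by
    rw [← SetLike.mem_coe, hAC]
    exact Set.subset_mul_right _ A.one_mem hc
  have hAC_subset : (AC : Set G) ⊆ C * AB := by
    rw [coe_eq_mul_comm hAC, hAB]
    exact Set.mul_subset_mul_left (Set.subset_mul_left _ B.one_mem)
  rw [inf_subgroupOf_right, inf_relIndex_right]
  exact ⟨⟨quotientSubgroupOfEquivOfLE AB hC_le_AC hAC_subset,
    quotientSubgroupOfEquivOfLE_apply_mk AB hC_le_AC hAC_subset⟩,
    relIndex_eq_of_le_of_subset_mul AB hC_le_AC hAC_subset⟩
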